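/- arXiv:1902.07044 — 6 statements merged into one kernel-verified Lean document; each statement's English description precedes it below -/
import Mathlib

section
/- Let (X, d) be a metric space and let a, x, y, b ∈ X satisfy a < x < y < b (i.e., d(a,x)+d(x,y) = d(a,y), d(x,y)+d(y,b) = d(x,b), with the adjacent points distinct). If additionally there exists z ∈ X with x < y < z < b and d(a, y) + d(y, z) > d(a, z), then d(a, x) + d(x, z) > d(a, z) and d(x, z) + d(z, b) = d(x, b). -/
def IsGeodesic {X : Type*} [MetricSpace X] (a b : X) (f : ℝ → X) : Prop :=
  f 0 = a ∧ f (dist a b) = b ∧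
    ∀ s ∈ Set.Icc (0 : ℝ) (dist a b), ∀ t ∈ Set.Icc (0 : ℝ) (dist a b),
      dist (f s) (f t) = |s - t|

def GeodesicSpace (X : Type*) [MetricSpace X] : Prop :=
  ∀ a b : X, ∃ f : ℝ → X, IsGeodesic a b f

/-- `MBtw p q r` means `p < q < r`: `q` is strictly between `p` and `r`. -/
def MBtw {X : Type*} [MetricSpace X] (p q r : X) : Prop :=
  p ≠ q ∧ q ≠ r ∧ dist p q + dist q r = dist p r

theorem stmt5 {X : Type*} [MetricSpace X] (a x y b z : X)
    (h1 : MBtw a x y) (h2 : MBtw x y b)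
    (h3 : MBtw x y z) (h4 : MBtw y z b)
    (h5 : dist a y + dist y z > dist a z) :
    dist a x + dist x z > dist a z ∧ dist x z + dist z b = dist x b := by
  obtain ⟨-, -, hxy_ay⟩ := h1
  obtain ⟨-, -, hxy_xb⟩ := h2
  obtain ⟨-, -, hxy_xz⟩ := h3
  obtain ⟨-, -, hyz_yb⟩ := h4
  constructor
  · calc dist a x + dist x z = dist a y + dist y z := by rw [← hxy_xz, ← hxy_ay]; ring
      _ > dist a z := h5
  · calc dist x z + dist z b = dist x y + dist y b := by rw [← hxy_xz, ← hyz_yb]; ring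
      _ = dist x b := hxy_xb
end

section
/- Let (X, d) be a geodesic metric space and let a, x, y, b ∈ X form a 4-cut: a < x < y < b, d(a, y) + d(y, b) > d(a, b), and d(a, x) + d(x, b) > d(a, b). Then there exists z ∈ X such that x < y < z < b and d(a, y) + d(y, z) > d(a, z). -/
/-! Move from `b` towards `y` along a geodesic to a point `z` close to `b`. Then `z` still lies
between `y` and `b`, hence `y` lies between `x` and `z`, and since `d(a,z) ≤ d(a,b) + d(z,b)`
the excess `d(a,y) + d(y,b) - d(a,b) > 0` survives as `d(a,y) + d(y,z) - d(a,z) > 0` as soon as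
`d(z,b)` is less than half of it. -/

theorem GeodesicSpace.exists_dist_eq_sub_and_dist_eq {X : Type*} [MetricSpace X]
    (hX : GeodesicSpace X) (y b : X) {s : ℝ} (hs₀ : 0 ≤ s) (hs : s ≤ dist y b) :
    ∃ z, dist y z = dist y b - s ∧ dist z b = s := by
  obtain ⟨f, hf₀, hf₁, hf⟩ := hX y b
  have hmem : dist y b - s ∈ Set.Icc 0 (dist y b) := ⟨by linarith, by linarith⟩
  have hy := hf 0 ⟨le_rfl, dist_nonneg⟩ _ hmem
  have hb := hf _ hmem _ ⟨dist_nonneg, le_rfl⟩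
  rw [hf₀] at hy
  rw [hf₁] at hb
  refine ⟨f (dist y b - s), ?_, ?_⟩
  · rw [hy, zero_sub, abs_neg, abs_of_nonneg hmem.1]
  · rw [hb, abs_of_nonpos (by linarith)]
    ring

theorem dist_add_dist_eq_of_dist_add_dist_eq {X : Type*} [MetricSpace X] {x y z b : X}
    (hxyb : dist x y + dist y b = dist x b) (hyzb : dist y z + dist z b = dist y b) :
    dist x y + dist y z = dist x z := by
  have := dist_triangle x y z
  have := dist_triangle x z b
  linarith

theorem stmt6_general {X : Type*} [MetricSpace X] (hX : GeodesicSpace X) (a x y b : X)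
    (h2 : MBtw x y b)
    (hy : dist a y + dist y b > dist a b) :
    ∃ z : X, MBtw x y z ∧ MBtw y z b ∧ dist a y + dist y z > dist a z := by
  obtain ⟨hxy, hyb, hxyb⟩ := h2
  have hexcess : 0 < (dist a y + dist y b - dist a b) / 2 := by linarith
  obtain ⟨s, hs₀, hs⟩ := exists_between (lt_min (dist_pos.2 hyb) hexcess)
  obtain ⟨hs_lt, hs_excess⟩ := lt_min_iff.1 hs
  obtain ⟨z, hyz, hzb⟩ := hX.exists_dist_eq_sub_and_dist_eq y b hs₀.le hs_lt.le
  have hyz_ne : y ≠ z := dist_pos.1 (by linarith)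
  have hyzb : dist y z + dist z b = dist y b := by linarith
  refine ⟨z, ⟨hxy, hyz_ne, dist_add_dist_eq_of_dist_add_dist_eq hxyb hyzb⟩,
    ⟨hyz_ne, dist_pos.1 (hzb ▸ hs₀), hyzb⟩, ?_⟩
  linarith [dist_triangle_right a z b]

theorem stmt6 {X : Type*} [MetricSpace X] (hX : GeodesicSpace X) (a x y b : X)
    (h1 : MBtw a x y) (h2 : MBtw x y b)
    (hy : dist a y + dist y b > dist a b)
    (hx : dist a x + dist x b > dist a b) :
    ∃ z : X, MBtw x y z ∧ MBtw y z b ∧ dist a y + dist y z > dist a z :=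
  stmt6_general hX a x y b h2 hy
end

section
/- Let (X, d) be a geodesic space, a, b ∈ X distinct, and suppose there is exactly one geodesic f joining a to b. Then every point x ∈ X with a < x < b lies on f, i.e., x = f(d(a, x)). Consequently, the set {x ∈ X : a < x < b} is totally ordered by the relation x ⪯ y defined by d(a, x) ≤ d(a, y). -/
/-!
A point `x` with `d(a, x) + d(x, b) = d(a, b)` lies on some geodesic from `a` to `b`: follow a
geodesic from `a` to `x` and then one from `x` to `b`. The concatenation is 1-Lipschitz, and a
1-Lipschitz path of length `d(a, b)` from `a` to `b` is automatically a geodesic. By uniqueness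
that path is `f`, so `x = f (d(a, x))`; hence points between `a` and `b` are determined by their
distance to `a`.
-/

open Set

section

variable {X : Type*} [MetricSpace X]

theorem isGeodesic_of_dist_le {a b : X} {f : ℝ → X} (h₀ : f 0 = a) (h₁ : f (dist a b) = b)
    (hlip : ∀ s ∈ Icc 0 (dist a b), ∀ t ∈ Icc 0 (dist a b), dist (f s) (f t) ≤ |s - t|) :
    IsGeodesic a b f := by
  refine ⟨h₀, h₁, fun s hs t ht => ?_⟩
  wlog hst : s ≤ t generalizing s t
  · rw [dist_comm, abs_sub_comm]
    exact this t ht s hs (le_of_not_ge hst)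
  refine le_antisymm (hlip s hs t ht) ?_
  have hzero := hlip 0 ⟨le_rfl, hs.1.trans hs.2⟩ s hs
  have hend := hlip t ht (dist a b) ⟨ht.1.trans ht.2, le_rfl⟩
  rw [h₀, zero_sub, abs_neg, abs_of_nonneg hs.1] at hzero
  rw [h₁, abs_of_nonpos (sub_nonpos.mpr ht.2)] at hend
  have htri := dist_triangle4 a (f s) (f t) b
  rw [abs_of_nonpos (sub_nonpos.mpr hst)]
  linarith

noncomputable def concatPath (g₁ g₂ : ℝ → X) (c : ℝ) : ℝ → X :=
  fun t => if t ≤ c then g₁ t else g₂ (t - c)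

theorem IsGeodesic.concat {a x b : X} {g₁ g₂ : ℝ → X} (h₁ : IsGeodesic a x g₁)
    (h₂ : IsGeodesic x b g₂) (hx : dist a x + dist x b = dist a b) :
    IsGeodesic a b (concatPath g₁ g₂ (dist a x)) := by
  obtain ⟨h₁0, h₁x, hiso₁⟩ := h₁
  obtain ⟨h₂0, h₂b, hiso₂⟩ := h₂
  set c := dist a x
  set g := concatPath g₁ g₂ c
  have hc : 0 ≤ c := dist_nonneg
  have hleft : ∀ t, t ≤ c → g t = g₁ t := fun t ht => if_pos ht
  have hright : ∀ t, c ≤ t → g t = g₂ (t - c) := by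
    intro t ht
    rcases ht.eq_or_lt with rfl | ht
    · rw [hleft c le_rfl, sub_self, h₁x, h₂0]
    · exact if_neg (not_le.mpr ht)
  have hisoL : ∀ s ∈ Icc 0 c, ∀ t ∈ Icc 0 c, dist (g s) (g t) = |s - t| := by
    intro s hs t ht
    rw [hleft s hs.2, hleft t ht.2, hiso₁ s hs t ht]
  have hisoR : ∀ s ∈ Icc c (dist a b), ∀ t ∈ Icc c (dist a b), dist (g s) (g t) = |s - t| := by
    intro s hs t ht
    rw [hright s hs.1, hright t ht.1, hiso₂ _ ⟨by linarith [hs.1], by linarith [hs.2]⟩ _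
      ⟨by linarith [ht.1], by linarith [ht.2]⟩, sub_sub_sub_cancel_right]
  refine isGeodesic_of_dist_le (by rw [hleft 0 hc, h₁0]) ?_ fun s hs t ht => ?_
  · rw [hright _ (by linarith [dist_nonneg (x := x) (y := b)]), ← hx, add_sub_cancel_left,
      h₂b]
  wlog hst : s ≤ t generalizing s t
  · rw [dist_comm, abs_sub_comm]
    exact this t ht s hs (le_of_not_ge hst)
  rcases le_total t c with htc | htc
  · exact (hisoL s ⟨hs.1, hst.trans htc⟩ t ⟨ht.1, htc⟩).le
  rcases le_total c s with hcs | hcs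
  · exact (hisoR s ⟨hcs, hs.2⟩ t ⟨htc, ht.2⟩).le
  have hcD : c ≤ dist a b := htc.trans ht.2
  calc dist (g s) (g t) ≤ dist (g s) (g c) + dist (g c) (g t) := dist_triangle _ _ _
    _ = |s - t| := by
      rw [hisoL s ⟨hs.1, hcs⟩ c ⟨hc, le_rfl⟩, hisoR c ⟨le_rfl, hcD⟩ t ⟨htc, ht.2⟩,
        abs_of_nonpos (by linarith), abs_of_nonpos (by linarith), abs_of_nonpos (by linarith)]
      ring

theorem eq_apply_dist_of_unique_geodesic (hX : GeodesicSpace X) {a b : X} {f : ℝ → X}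
    (huniq : ∀ g : ℝ → X, IsGeodesic a b g → ∀ t ∈ Icc 0 (dist a b), g t = f t)
    {x : X} (hx : dist a x + dist x b = dist a b) : x = f (dist a x) := by
  obtain ⟨g₁, hg₁⟩ := hX a x
  obtain ⟨g₂, hg₂⟩ := hX x b
  have hmem : dist a x ∈ Icc 0 (dist a b) := ⟨dist_nonneg, hx ▸ le_add_of_nonneg_right dist_nonneg⟩
  rw [← huniq _ (hg₁.concat hg₂ hx) _ hmem, concatPath, if_pos le_rfl, hg₁.2.1]

end

theorem stmt10_general {X : Type*} [MetricSpace X] (hX : GeodesicSpace X)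
    (a b : X) (f : ℝ → X)
    (huniq : ∀ g : ℝ → X, IsGeodesic a b g →
      ∀ t ∈ Set.Icc (0 : ℝ) (dist a b), g t = f t) :
    (∀ x : X, MBtw a x b → x = f (dist a x)) ∧
      (∀ x y : X, MBtw a x b → MBtw a y b → dist a x = dist a y → x = y) := by
  have hon : ∀ x : X, MBtw a x b → x = f (dist a x) := fun x hx =>
    eq_apply_dist_of_unique_geodesic hX huniq hx.2.2
  exact ⟨hon, fun x y hx hy hxy => by rw [hon x hx, hon y hy, hxy]⟩

theorem stmt10 {X : Type*} [MetricSpace X] (hX : GeodesicSpace X)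
    (a b : X) (hab : a ≠ b) (f : ℝ → X) (hf : IsGeodesic a b f)
    (huniq : ∀ g : ℝ → X, IsGeodesic a b g →
      ∀ t ∈ Set.Icc (0 : ℝ) (dist a b), g t = f t) :
    (∀ x : X, MBtw a x b → x = f (dist a x)) ∧
      (∀ x y : X, MBtw a x b → MBtw a y b → dist a x = dist a y → x = y) :=
  stmt10_general hX a b f huniq
end

section
/- Let (X, d) be a geodesic space and a, b ∈ X distinct. Define a map Ψ from Geod(a,b) to the vertex set of A(a,b) modulo edge-connectedness by Ψ(f) = [f(t)] for any t ∈ (0, d(a,b)). Then Ψ is well-defined: (1) [f(t)] = [f(t')] for any t, t' ∈ (0, d(a,b)); (2) if f and g intersect at a point other than a or b, then Ψ(f) = Ψ(g). -/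
/-- `x` and `y` span a 1-simplex of the simplicial complex `A(a,b)`. -/
def Edge {X : Type*} [MetricSpace X] (a b x y : X) : Prop :=
  (MBtw a x y ∧ MBtw x y b) ∨ (MBtw a y x ∧ MBtw y x b)

/-! Two points of one geodesic span an edge, so a geodesic meets a single edge-component; a common
interior point then glues the components of two geodesics. -/

namespace IsGeodesic

variable {X : Type*} [MetricSpace X] {a b : X} {f : ℝ → X}

theorem mBtw_of_lt (hf : IsGeodesic a b f) {s t u : ℝ} (hs : 0 ≤ s) (hst : s < t) (htu : t < u)
    (hu : u ≤ dist a b) : MBtw (f s) (f t) (f u) := by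
  have dist_eq := hf.2.2
  have hs' : s ∈ Set.Icc 0 (dist a b) := ⟨hs, by linarith⟩
  have ht' : t ∈ Set.Icc 0 (dist a b) := ⟨by linarith, by linarith⟩
  have hu' : u ∈ Set.Icc 0 (dist a b) := ⟨by linarith, hu⟩
  refine ⟨fun h => ?_, fun h => ?_, ?_⟩
  · have := dist_eq s hs' t ht'
    rw [h, dist_self, abs_of_neg (by linarith)] at this
    linarith
  · have := dist_eq t ht' u hu'
    rw [h, dist_self, abs_of_neg (by linarith)] at this
    linarith
  · rw [dist_eq s hs' t ht', dist_eq t ht' u hu', dist_eq s hs' u hu',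
      abs_of_neg (by linarith), abs_of_neg (by linarith), abs_of_neg (by linarith)]
    ring

theorem edge_of_lt (hf : IsGeodesic a b f) {t t' : ℝ} (ht : 0 < t) (htt' : t < t')
    (ht' : t' < dist a b) : Edge a b (f t) (f t') := by
  left
  constructor
  · simpa only [hf.1] using hf.mBtw_of_lt le_rfl ht htt' ht'.le
  · simpa only [hf.2.1] using hf.mBtw_of_lt ht.le htt' ht' le_rfl

theorem eqvGen_edge (hf : IsGeodesic a b f) {t t' : ℝ} (ht : t ∈ Set.Ioo 0 (dist a b))
    (ht' : t' ∈ Set.Ioo 0 (dist a b)) : Relation.EqvGen (Edge a b) (f t) (f t') := by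
  rcases lt_trichotomy t t' with h | rfl | h
  · exact .rel _ _ (hf.edge_of_lt ht.1 h ht'.2)
  · exact .refl _
  · exact .symm _ _ (.rel _ _ (hf.edge_of_lt ht'.1 h ht.2))

end IsGeodesic

theorem stmt12_general {X : Type*} [MetricSpace X]
    (a b : X) :
    (∀ f : ℝ → X, IsGeodesic a b f →
      ∀ t ∈ Set.Ioo (0 : ℝ) (dist a b), ∀ t' ∈ Set.Ioo (0 : ℝ) (dist a b),
        Relation.EqvGen (Edge a b) (f t) (f t')) ∧
    (∀ f g : ℝ → X, IsGeodesic a b f → IsGeodesic a b g →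
      (∃ s ∈ Set.Ioo (0 : ℝ) (dist a b), ∃ u ∈ Set.Ioo (0 : ℝ) (dist a b), f s = g u) →
      ∀ t ∈ Set.Ioo (0 : ℝ) (dist a b), ∀ t' ∈ Set.Ioo (0 : ℝ) (dist a b),
        Relation.EqvGen (Edge a b) (f t) (g t')) := by
  refine ⟨fun f hf t ht t' ht' => hf.eqvGen_edge ht ht', ?_⟩
  rintro f g hf hg ⟨s, hs, u, hu, hsu⟩ t ht t' ht'
  exact .trans _ _ _ (hf.eqvGen_edge ht hs) (hsu ▸ hg.eqvGen_edge hu ht')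

theorem stmt12 {X : Type*} [MetricSpace X] (hX : GeodesicSpace X)
    (a b : X) (hab : a ≠ b) :
    (∀ f : ℝ → X, IsGeodesic a b f →
      ∀ t ∈ Set.Ioo (0 : ℝ) (dist a b), ∀ t' ∈ Set.Ioo (0 : ℝ) (dist a b),
        Relation.EqvGen (Edge a b) (f t) (f t')) ∧
    (∀ f g : ℝ → X, IsGeodesic a b f → IsGeodesic a b g →
      (∃ s ∈ Set.Ioo (0 : ℝ) (dist a b), ∃ u ∈ Set.Ioo (0 : ℝ) (dist a b), f s = g u) →
      ∀ t ∈ Set.Ioo (0 : ℝ) (dist a b), ∀ t' ∈ Set.Ioo (0 : ℝ) (dist a b),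
        Relation.EqvGen (Edge a b) (f t) (g t')) :=
  stmt12_general a b
end

section
/- Let (X, d) be a geodesic space and a, b ∈ X distinct. The map Φ : π₀(A(a,b)) → π₀(Geod(a,b)) sending the class of a vertex x (with a < x < b) to the class of any geodesic joining a to b through x, and the map Ψ : π₀(Geod(a,b)) → π₀(A(a,b)) sending the class of a geodesic f to the class of f(t) for any t ∈ (0, d(a,b)), are mutually inverse bijections. -/
/-- Two geodesics joining `a` to `b` intersect at a point other than `a` or `b`. -/
def GeodRel {X : Type*} [MetricSpace X] (a b : X) (f g : ℝ → X) : Prop :=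
  ∃ s ∈ Set.Ioo (0 : ℝ) (dist a b), ∃ t ∈ Set.Ioo (0 : ℝ) (dist a b), f s = g t

/-!
Both relations are generated by "lying on a common geodesic". Every interior point of a geodesic
`f` is joined by an edge of `A(a,b)` to every other one, so `Ψ [f] := [f (d(a,b)/2)]` does not
depend on the chosen point, and geodesics meeting in the interior have the same image. Conversely,
concatenating geodesics `a → x → y → b` shows that the endpoints of an edge `a < x < y < b` lie on
one geodesic, so `Φ [x] := [geodesic through x]` is well defined. Both composites send a class to a
class sharing a representative point or geodesic with it, hence are identities.
-/

open Set

namespace IsGeodesic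

variable {X : Type*} [MetricSpace X] {a b c : X} {f : ℝ → X} {s t : ℝ}

lemma dist_apply_apply (hf : IsGeodesic a b f) (hs : s ∈ Icc 0 (dist a b))
    (ht : t ∈ Icc 0 (dist a b)) (hst : s ≤ t) : dist (f s) (f t) = t - s := by
  rw [hf.2.2 s hs t ht, abs_sub_comm, abs_of_nonneg (sub_nonneg.2 hst)]

lemma dist_left_apply (hf : IsGeodesic a b f) (ht : t ∈ Icc 0 (dist a b)) :
    dist a (f t) = t := by
  simpa [hf.1] using hf.dist_apply_apply (left_mem_Icc.2 dist_nonneg) ht ht.1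

lemma dist_apply_right (hf : IsGeodesic a b f) (ht : t ∈ Icc 0 (dist a b)) :
    dist (f t) b = dist a b - t := by
  simpa [hf.2.1] using hf.dist_apply_apply ht (right_mem_Icc.2 dist_nonneg) ht.2

/-- A `1`-Lipschitz path of length `d(a,b)` from `a` to `b` is a geodesic: any slack in
`d(f s, f t) ≤ t - s` would make `d(a, b)` shorter than the length of the path. -/
lemma of_dist_le (h0 : f 0 = a) (h1 : f (dist a b) = b)
    (hle : ∀ s ∈ Icc 0 (dist a b), ∀ t ∈ Icc 0 (dist a b), s ≤ t → dist (f s) (f t) ≤ t - s) :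
    IsGeodesic a b f := by
  have hD : 0 ≤ dist a b := dist_nonneg
  have key : ∀ s ∈ Icc 0 (dist a b), ∀ t ∈ Icc 0 (dist a b), s ≤ t →
      dist (f s) (f t) = t - s := by
    intro s hs t ht hst
    have has := hle 0 (left_mem_Icc.2 hD) s hs hs.1
    have htb := hle t ht _ (right_mem_Icc.2 hD) ht.2
    rw [h0] at has
    rw [h1] at htb
    linarith [hle s hs t ht hst, dist_triangle4 a (f s) (f t) b]
  refine ⟨h0, h1, fun s hs t ht => ?_⟩
  rcases le_total s t with hst | hts
  · rw [key s hs t ht hst, abs_sub_comm, abs_of_nonneg (sub_nonneg.2 hst)]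
  · rw [dist_comm, key t ht s hs hts, abs_of_nonneg (sub_nonneg.2 hts)]

lemma concat_s13 {g : ℝ → X} (hf : IsGeodesic a c f) (hg : IsGeodesic c b g)
    (hc : dist a c + dist c b = dist a b) :
    IsGeodesic a b fun t => if t ≤ dist a c then f t else g (t - dist a c) := by
  have hp : 0 ≤ dist a c := dist_nonneg
  refine of_dist_le (by simpa [hp] using hf.1) ?_ fun s hs t ht hst => ?_
  · rcases (dist_nonneg : 0 ≤ dist c b).eq_or_lt with hq | hq
    · have hcb : c = b := dist_eq_zero.1 hq.symm
      have hD : dist a b = dist a c := by linarith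
      simp only [hD, le_refl, if_true, hf.2.1, hcb]
    · simp only [show ¬ dist a b ≤ dist a c by linarith, if_false,
        show dist a b - dist a c = dist c b by linarith, hg.2.1]
  have hD : dist a b = dist a c + dist c b := hc.symm
  by_cases htp : t ≤ dist a c
  · rw [if_pos (hst.trans htp), if_pos htp,
      hf.dist_apply_apply ⟨hs.1, hst.trans htp⟩ ⟨ht.1, htp⟩ hst]
  have htp' : t - dist a c ∈ Icc 0 (dist c b) := ⟨by linarith, by linarith [ht.2]⟩
  rw [if_neg htp]
  by_cases hsp : s ≤ dist a c
  · rw [if_pos hsp]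
    calc dist (f s) (g (t - dist a c)) ≤ dist (f s) c + dist c (g (t - dist a c)) :=
          dist_triangle _ _ _
      _ = t - s := by
          rw [hf.dist_apply_right ⟨hs.1, hsp⟩, hg.dist_left_apply htp']
          ring
  · rw [if_neg hsp, hg.dist_apply_apply ⟨by linarith, by linarith [hs.2]⟩ htp' (by linarith)]
    linarith

lemma exists_extend (hX : GeodesicSpace X) (hf : IsGeodesic a c f)
    (hc : dist a c + dist c b = dist a b) :
    ∃ h, IsGeodesic a b h ∧ ∀ t ∈ Icc 0 (dist a c), h t = f t :=
  let ⟨_, hg⟩ := hX c b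
  ⟨_, hf.concat_s13 hg hc, fun _ ht => if_pos ht.2⟩

lemma mbtw_apply (hf : IsGeodesic a b f) (ht : t ∈ Ioo 0 (dist a b)) : MBtw a (f t) b := by
  have ht' : t ∈ Icc 0 (dist a b) := Ioo_subset_Icc_self ht
  refine ⟨?_, ?_, by rw [hf.dist_left_apply ht', hf.dist_apply_right ht']; ring⟩
  · rw [← dist_pos, hf.dist_left_apply ht']
    exact ht.1
  · rw [← dist_pos, hf.dist_apply_right ht']
    linarith [ht.2]

lemma edge_apply_apply (hf : IsGeodesic a b f) (hs : s ∈ Ioo 0 (dist a b))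
    (ht : t ∈ Ioo 0 (dist a b)) (hst : s < t) : Edge a b (f s) (f t) := by
  have hs' : s ∈ Icc 0 (dist a b) := Ioo_subset_Icc_self hs
  have ht' : t ∈ Icc 0 (dist a b) := Ioo_subset_Icc_self ht
  have hdist := hf.dist_apply_apply hs' ht' hst.le
  have hne : f s ≠ f t := by
    rw [← dist_pos, hdist]
    linarith
  refine Or.inl ⟨⟨(hf.mbtw_apply hs).1, hne, ?_⟩, ⟨hne, (hf.mbtw_apply ht).2.1, ?_⟩⟩
  · rw [hf.dist_left_apply hs', hdist, hf.dist_left_apply ht']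
    ring
  · rw [hdist, hf.dist_apply_right ht', hf.dist_apply_right hs']
    ring

end IsGeodesic

lemma MBtw.dist_mem_Ioo {X : Type*} [MetricSpace X] {a x b : X} (h : MBtw a x b) :
    dist a x ∈ Ioo 0 (dist a b) :=
  ⟨dist_pos.2 h.1, by linarith [h.2.2, dist_pos.2 h.2.1]⟩

namespace GeodesicSpace

variable {X : Type*} [MetricSpace X] {a b x y : X}

lemma exists_isGeodesic_apply_eq (hX : GeodesicSpace X) (hx : dist a x + dist x b = dist a b) :
    ∃ f, IsGeodesic a b f ∧ f (dist a x) = x := by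
  obtain ⟨g, hg⟩ := hX a x
  obtain ⟨f, hf, hfg⟩ := hg.exists_extend hX hx
  exact ⟨f, hf, (hfg _ (right_mem_Icc.2 dist_nonneg)).trans hg.2.1⟩

lemma exists_isGeodesic_apply_eq_apply_eq (hX : GeodesicSpace X)
    (hxy : dist a x + dist x y = dist a y) (hyb : dist x y + dist y b = dist x b)
    (hxb : dist a x + dist x b = dist a b) :
    ∃ f, IsGeodesic a b f ∧ f (dist a x) = x ∧ f (dist a y) = y := by
  obtain ⟨g, hg, hgx⟩ := hX.exists_isGeodesic_apply_eq hxy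
  obtain ⟨f, hf, hfg⟩ := hg.exists_extend hX (b := b) (by linarith)
  refine ⟨f, hf, ?_, (hfg _ (right_mem_Icc.2 dist_nonneg)).trans hg.2.1⟩
  rw [hfg _ ⟨dist_nonneg, by linarith [dist_nonneg (x := x) (y := y)]⟩, hgx]

end GeodesicSpace

section Components

variable {X : Type*} [MetricSpace X] {a b : X}

variable (a b) in
abbrev VertexClass := Quot fun x y : {x : X // MBtw a x b} => Edge a b x.1 y.1

variable (a b) in
abbrev GeodClass := Quot fun f g : {f : ℝ → X // IsGeodesic a b f} => GeodRel a b f.1 g.1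

lemma IsGeodesic.mk_eq_mk {f : ℝ → X} (hf : IsGeodesic a b f) {s t : ℝ}
    (hs : s ∈ Ioo 0 (dist a b)) (ht : t ∈ Ioo 0 (dist a b)) {x y : {x : X // MBtw a x b}}
    (hx : x.1 = f s) (hy : y.1 = f t) : (Quot.mk _ x : VertexClass a b) = Quot.mk _ y := by
  rcases lt_trichotomy s t with hst | rfl | hts
  · exact Quot.sound (hx ▸ hy ▸ hf.edge_apply_apply hs ht hst)
  · rw [Subtype.ext (hx.trans hy.symm)]
  · exact (Quot.sound (hx ▸ hy ▸ hf.edge_apply_apply ht hs hts)).symm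

noncomputable def geodesicThrough (hX : GeodesicSpace X) (x : {x : X // MBtw a x b}) :
    {f : ℝ → X // IsGeodesic a b f} :=
  ⟨_, (hX.exists_isGeodesic_apply_eq x.2.2.2).choose_spec.1⟩

lemma geodesicThrough_apply (hX : GeodesicSpace X) (x : {x : X // MBtw a x b}) :
    (geodesicThrough hX x).1 (dist a x) = x :=
  (hX.exists_isGeodesic_apply_eq x.2.2.2).choose_spec.2

lemma mk_geodesicThrough_eq (hX : GeodesicSpace X) (x : {x : X // MBtw a x b})
    (f : {f : ℝ → X // IsGeodesic a b f}) {t : ℝ} (ht : t ∈ Ioo 0 (dist a b))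
    (hft : f.1 t = x.1) : (Quot.mk _ (geodesicThrough hX x) : GeodClass a b) = Quot.mk _ f :=
  Quot.sound ⟨_, x.2.dist_mem_Ioo, t, ht, (geodesicThrough_apply hX x).trans hft.symm⟩

lemma mk_geodesicThrough_eq_of_edge (hX : GeodesicSpace X) (x y : {x : X // MBtw a x b})
    (hxy : Edge a b x.1 y.1) :
    (Quot.mk _ (geodesicThrough hX x) : GeodClass a b) = Quot.mk _ (geodesicThrough hX y) := by
  have key : ∀ x y : {x : X // MBtw a x b}, MBtw a x.1 y.1 → MBtw x.1 y.1 b →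
      (Quot.mk _ (geodesicThrough hX x) : GeodClass a b) = Quot.mk _ (geodesicThrough hX y) := by
    intro x y hxy hyb
    obtain ⟨f, hf, hfx, hfy⟩ :=
      hX.exists_isGeodesic_apply_eq_apply_eq hxy.2.2 hyb.2.2 x.2.2.2
    rw [mk_geodesicThrough_eq hX x ⟨f, hf⟩ x.2.dist_mem_Ioo hfx,
      mk_geodesicThrough_eq hX y ⟨f, hf⟩ y.2.dist_mem_Ioo hfy]
  rcases hxy with ⟨hxy, hyb⟩ | ⟨hyx, hxb⟩
  · exact key x y hxy hyb
  · exact (key y x hyx hxb).symm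

noncomputable def vertexClassToGeodClass (hX : GeodesicSpace X) :
    VertexClass a b → GeodClass a b :=
  Quot.lift (fun x => Quot.mk _ (geodesicThrough hX x)) (mk_geodesicThrough_eq_of_edge hX)

lemma half_dist_mem_Ioo (hab : a ≠ b) : dist a b / 2 ∈ Ioo 0 (dist a b) := by
  have := dist_pos.2 hab
  constructor <;> linarith

noncomputable def geodClassToVertexClass (hab : a ≠ b) : GeodClass a b → VertexClass a b :=
  Quot.lift (fun f => Quot.mk _ ⟨f.1 (dist a b / 2), f.2.mbtw_apply (half_dist_mem_Ioo hab)⟩)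
    fun f g ⟨_, hs, _, ht, hfg⟩ =>
      (f.2.mk_eq_mk (half_dist_mem_Ioo hab) hs rfl rfl).trans
        (g.2.mk_eq_mk (x := ⟨_, f.2.mbtw_apply hs⟩) ht (half_dist_mem_Ioo hab) hfg rfl)

lemma geodClassToVertexClass_mk (hab : a ≠ b) (f : {f : ℝ → X // IsGeodesic a b f}) {t : ℝ}
    (ht : t ∈ Ioo 0 (dist a b)) (x : {x : X // MBtw a x b}) (hx : x.1 = f.1 t) :
    geodClassToVertexClass hab (Quot.mk _ f) = Quot.mk _ x :=
  f.2.mk_eq_mk (half_dist_mem_Ioo hab) ht rfl hx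

end Components

theorem stmt13 {X : Type*} [MetricSpace X] (hX : GeodesicSpace X)
    (a b : X) (hab : a ≠ b) :
    ∃ (Φ : Quot (fun x y : {x : X // MBtw a x b} => Edge a b x.1 y.1) →
           Quot (fun f g : {f : ℝ → X // IsGeodesic a b f} => GeodRel a b f.1 g.1))
      (Ψ : Quot (fun f g : {f : ℝ → X // IsGeodesic a b f} => GeodRel a b f.1 g.1) →
           Quot (fun x y : {x : X // MBtw a x b} => Edge a b x.1 y.1)),
      (∀ (x : {x : X // MBtw a x b}) (f : {f : ℝ → X // IsGeodesic a b f}),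
          (∃ t ∈ Set.Ioo (0 : ℝ) (dist a b), f.1 t = x.1) →
          Φ (Quot.mk _ x) = Quot.mk _ f) ∧
      (∀ (f : {f : ℝ → X // IsGeodesic a b f}) (t : ℝ),
          t ∈ Set.Ioo (0 : ℝ) (dist a b) →
          ∀ (x : {x : X // MBtw a x b}), x.1 = f.1 t →
          Ψ (Quot.mk _ f) = Quot.mk _ x) ∧
      Function.LeftInverse Ψ Φ ∧ Function.RightInverse Ψ Φ := by
  refine ⟨vertexClassToGeodClass hX, geodClassToVertexClass hab,
    fun x f ⟨t, ht, hft⟩ => mk_geodesicThrough_eq hX x f ht hft,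
    fun f t ht x hx => geodClassToVertexClass_mk hab f ht x hx,
    Quot.ind fun x => ?_, Quot.ind fun f => ?_⟩
  · exact geodClassToVertexClass_mk hab _ x.2.dist_mem_Ioo x (geodesicThrough_apply hX x).symm
  · exact mk_geodesicThrough_eq hX _ f (half_dist_mem_Ioo hab) rfl
end

section
/- Let (X, d) be a geodesic space satisfying the non-branching condition: any two geodesics joining the same endpoints that share a point other than the endpoints coincide. Let q ≥ 2 and let φ₀, …, φ_q ∈ X with consecutive points distinct, and suppose for each i = 1, …, q there exist two distinct geodesics f_i ≠ f_i' joining φ_{i−1} to φ_i. Then there exist points x_i on f_i((0, ℓ_i)) and x_i' on f_i'((0, ℓ_i)) (where ℓ_i = d(φ_{i−1}, φ_i)) such that for each i = 1, …, q−1 and each choice of y ∈ {x_i, x_i'} and z ∈ {x_{i+1}, x_{i+1}'}, one has d(y, φ_i) + d(φ_i, z) > d(y, z). -/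
/-- Non-branching: two geodesics with the same endpoints sharing an interior point agree
on the whole parameter interval. -/
def NonBranching (X : Type*) [MetricSpace X] : Prop :=
  ∀ p q : X, ∀ f g : ℝ → X, IsGeodesic p q f → IsGeodesic p q g →
    (∃ t ∈ Set.Ioo (0 : ℝ) (dist p q), f t = g t) →
    ∀ t ∈ Set.Icc (0 : ℝ) (dist p q), f t = g t

/-! If `m` lay between `φ_{i-1}` and a point `z` of the next segment, gluing either of the two
geodesics `f_i ≠ f_i'` to a geodesic from `m` to `z` would give two geodesics from `φ_{i-1}` to
`z` meeting at the interior point `m`, so non-branching would force `f_i = f_i'`. Hence the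
triangle inequality at `m` is strict for `φ_{i-1}` and `z`, and by continuity also for points of
`f_i` and `f_i'` close enough to `φ_{i-1}`. Choosing the points segment by segment from the last
one backwards gives the admissible set. -/

open Set Filter Topology

section Geodesic

variable {X : Type*} [MetricSpace X] {p m z : X} {g h : ℝ → X}

theorem IsGeodesic.dist_left (hg : IsGeodesic p m g) {s : ℝ} (hs : s ∈ Icc 0 (dist p m)) :
    dist p (g s) = s := by
  rw [← hg.1, hg.2.2 0 ⟨le_rfl, dist_nonneg⟩ s hs, zero_sub, abs_neg, abs_of_nonneg hs.1]

theorem IsGeodesic.dist_right (hg : IsGeodesic p m g) {s : ℝ} (hs : s ∈ Icc 0 (dist p m)) :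
    dist (g s) m = dist p m - s := by
  conv_lhs => rw [← hg.2.1]
  rw [hg.2.2 s hs _ ⟨dist_nonneg, le_rfl⟩, abs_of_nonpos (by linarith [hs.2]), neg_sub]

theorem IsGeodesic.restrict (hg : IsGeodesic p m g) {t : ℝ} (ht : t ∈ Icc 0 (dist p m)) :
    IsGeodesic p (g t) g := by
  rw [IsGeodesic, hg.dist_left ht]
  exact ⟨hg.1, rfl, fun s hs u hu ↦
    hg.2.2 s ⟨hs.1, hs.2.trans ht.2⟩ u ⟨hu.1, hu.2.trans ht.2⟩⟩

theorem IsGeodesic.dist_apply_of_dist_eq_add (hg : IsGeodesic p m g) (hh : IsGeodesic m z h)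
    (hpz : dist p z = dist p m + dist m z) {a c : ℝ} (ha : a ∈ Icc 0 (dist p m))
    (hc : c ∈ Icc 0 (dist m z)) : dist (g a) (h c) = dist p m - a + c := by
  apply le_antisymm
  · calc dist (g a) (h c) ≤ dist (g a) m + dist m (h c) := dist_triangle _ _ _
      _ = dist p m - a + c := by rw [hg.dist_right ha, hh.dist_left hc]
  · have hp := dist_triangle p (g a) (h c)
    have hz := dist_triangle p (h c) z
    rw [hg.dist_left ha] at hp
    rw [hh.dist_right hc] at hz
    linarith

theorem IsGeodesic.concat_s14 (hg : IsGeodesic p m g) (hh : IsGeodesic m z h)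
    (hpz : dist p z = dist p m + dist m z) :
    IsGeodesic p z (fun a ↦ if a ≤ dist p m then g a else h (a - dist p m)) := by
  have hL : 0 ≤ dist p m := dist_nonneg
  have hz : 0 ≤ dist m z := dist_nonneg
  refine ⟨by simp [hL, hg.1], ?_, fun a ha b hb ↦ ?_⟩
  · rw [hpz]
    dsimp only
    split_ifs with hz0
    · rw [add_eq_left.2 (by linarith), hg.2.1]
      exact dist_eq_zero.1 (by linarith)
    · rw [add_sub_cancel_left, hh.2.1]
  rw [hpz] at ha hb
  dsimp only
  split_ifs with hal hbl hbl
  · exact hg.2.2 a ⟨ha.1, hal⟩ b ⟨hb.1, hbl⟩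
  · rw [hg.dist_apply_of_dist_eq_add hh hpz ⟨ha.1, hal⟩ ⟨by linarith, by linarith [hb.2]⟩,
      abs_of_nonpos (by linarith)]
    ring
  · rw [dist_comm, hg.dist_apply_of_dist_eq_add hh hpz ⟨hb.1, hbl⟩
      ⟨by linarith, by linarith [ha.2]⟩, abs_of_nonneg (by linarith)]
    ring
  · rw [hh.2.2 _ ⟨by linarith, by linarith [ha.2]⟩ _ ⟨by linarith, by linarith [hb.2]⟩,
      sub_sub_sub_cancel_right]

theorem IsGeodesic.eventually_dist_lt_add (hg : IsGeodesic p m g) (hpm : p ≠ m)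
    (hz : dist p z < dist p m + dist m z) :
    ∀ᶠ s in 𝓝[>] 0, s ∈ Ioo 0 (dist p m) ∧ dist (g s) z < dist (g s) m + dist m z := by
  have hL : 0 < dist p m := dist_pos.2 hpm
  filter_upwards [Ioo_mem_nhdsGT (lt_min hL (half_pos (sub_pos.2 hz)))] with s hs
  have hsL : s < dist p m := hs.2.trans_le (min_le_left _ _)
  have hsδ : s < (dist p m + dist m z - dist p z) / 2 := hs.2.trans_le (min_le_right _ _)
  have hsIcc : s ∈ Icc 0 (dist p m) := ⟨hs.1.le, hsL.le⟩
  refine ⟨⟨hs.1, hsL⟩, ?_⟩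
  calc dist (g s) z ≤ dist (g s) p + dist p z := dist_triangle _ _ _
    _ = s + dist p z := by rw [dist_comm, hg.dist_left hsIcc]
    _ < dist p m - s + dist m z := by linarith
    _ = dist (g s) m + dist m z := by rw [hg.dist_right hsIcc]

end Geodesic

namespace NonBranching

variable {X : Type*} [MetricSpace X] {p m w z : X} {f f' F F' : ℝ → X}

theorem dist_lt_add (hnb : NonBranching X) (hf : IsGeodesic p m f) (hf' : IsGeodesic p m f')
    (hne : ∃ t ∈ Icc 0 (dist p m), f t ≠ f' t) (hpm : p ≠ m) (hF : IsGeodesic m z F)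
    (hmz : m ≠ z) : dist p z < dist p m + dist m z := by
  by_contra hle
  have hpz : dist p z = dist p m + dist m z :=
    le_antisymm (dist_triangle _ _ _) (not_lt.1 hle)
  have hL : 0 < dist p m := dist_pos.2 hpm
  have hmeet : ∃ u ∈ Ioo 0 (dist p z),
      (if u ≤ dist p m then f u else F (u - dist p m)) =
        (if u ≤ dist p m then f' u else F (u - dist p m)) :=
    ⟨dist p m, ⟨hL, by linarith [dist_pos.2 hmz]⟩, by simp [hf.2.1, hf'.2.1]⟩
  have heq := hnb p z _ _ (hf.concat_s14 hF hpz) (hf'.concat_s14 hF hpz) hmeet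
  obtain ⟨t, ht, hft⟩ := hne
  have hft' := heq t ⟨ht.1, by linarith [ht.2, dist_nonneg (x := m) (y := z)]⟩
  simp only [if_pos ht.2] at hft'
  exact hft hft'

theorem exists_pair_dist_lt_add (hnb : NonBranching X) (hf : IsGeodesic p m f)
    (hf' : IsGeodesic p m f')
    (hne : ∃ t ∈ Icc 0 (dist p m), f t ≠ f' t) (hpm : p ≠ m)
    (hF : IsGeodesic m w F) (hF' : IsGeodesic m w F') {t t' : ℝ}
    (ht : t ∈ Ioo 0 (dist m w)) (ht' : t' ∈ Ioo 0 (dist m w)) :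
    ∃ s ∈ Ioo 0 (dist p m), ∃ s' ∈ Ioo 0 (dist p m),
      ∀ y ∈ ({f s, f' s'} : Set X), ∀ z ∈ ({F t, F' t'} : Set X),
        dist y m + dist m z > dist y z := by
  have hstrict : ∀ {G : ℝ → X} {u : ℝ}, IsGeodesic m w G → u ∈ Ioo 0 (dist m w) →
      dist p (G u) < dist p m + dist m (G u) := fun hG hu ↦
    hnb.dist_lt_add hf hf' hne hpm (hG.restrict ⟨hu.1.le, hu.2.le⟩)
      (dist_pos.1 (by rw [hG.dist_left ⟨hu.1.le, hu.2.le⟩]; exact hu.1))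
  obtain ⟨s, ⟨hs, hsF⟩, -, hsF'⟩ :=
    ((hf.eventually_dist_lt_add hpm (hstrict hF ht)).and
      (hf.eventually_dist_lt_add hpm (hstrict hF' ht'))).exists
  obtain ⟨s', ⟨hs', hs'F⟩, -, hs'F'⟩ :=
    ((hf'.eventually_dist_lt_add hpm (hstrict hF ht)).and
      (hf'.eventually_dist_lt_add hpm (hstrict hF' ht'))).exists
  refine ⟨s, hs, s', hs', ?_⟩
  rintro y (rfl | rfl) z (rfl | rfl)
  exacts [hsF, hsF', hs'F, hs'F']

end NonBranching

theorem exists_chain_of_forall_exists_pred {α : Type*} {q : ℕ} (S : Fin q → Set α)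
    (R : Fin q → Fin q → α → α → Prop) (hS : ∀ i, (S i).Nonempty)
    (hR : ∀ i j : Fin q, (i : ℕ) + 1 = j → ∀ b ∈ S j, ∃ a ∈ S i, R i j a b) :
    ∃ c : Fin q → α, (∀ i, c i ∈ S i) ∧
      ∀ i j : Fin q, (i : ℕ) + 1 = j → R i j (c i) (c j) := by
  cases q with
  | zero => exact ⟨Fin.elim0, fun i ↦ i.elim0, fun i ↦ i.elim0⟩
  | succ n =>
    choose pred hpred using hR
    let c : (k : Fin (n + 1)) → S k := Fin.reverseInduction (motive := fun k ↦ S k)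
      ⟨(hS _).some, (hS _).some_mem⟩
      (fun k b ↦ ⟨pred k.castSucc k.succ (by simp) b b.2, (hpred _ _ _ b b.2).1⟩)
    refine ⟨fun k ↦ c k, fun k ↦ (c k).2, fun i j hij ↦ ?_⟩
    obtain ⟨k, rfl, rfl⟩ : ∃ k : Fin n, i = k.castSucc ∧ j = k.succ :=
      ⟨⟨i, by omega⟩, rfl, Fin.ext (by simp [← hij])⟩
    simp only [c, Fin.reverseInduction_castSucc]
    exact (hpred _ _ _ _ _).2

theorem stmt14_general {X : Type*} [MetricSpace X] (hnb : NonBranching X)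
    (q : ℕ) (φ : Fin (q + 1) → X)
    (hφ : ∀ i : Fin q, φ i.castSucc ≠ φ i.succ)
    (f f' : Fin q → ℝ → X)
    (hf : ∀ i, IsGeodesic (φ i.castSucc) (φ i.succ) (f i))
    (hf' : ∀ i, IsGeodesic (φ i.castSucc) (φ i.succ) (f' i))
    (hne : ∀ i, ∃ t ∈ Set.Icc (0 : ℝ) (dist (φ i.castSucc) (φ i.succ)), f i t ≠ f' i t) :
    ∃ x x' : Fin q → X,
      (∀ i, ∃ t ∈ Set.Ioo (0 : ℝ) (dist (φ i.castSucc) (φ i.succ)), f i t = x i) ∧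
      (∀ i, ∃ t ∈ Set.Ioo (0 : ℝ) (dist (φ i.castSucc) (φ i.succ)), f' i t = x' i) ∧
      (∀ i j : Fin q, (i : ℕ) + 1 = (j : ℕ) →
        ∀ y ∈ ({x i, x' i} : Set X), ∀ z ∈ ({x j, x' j} : Set X),
          dist y (φ i.succ) + dist (φ i.succ) z > dist y z) := by
  set ℓ : Fin q → ℝ := fun i ↦ dist (φ i.castSucc) (φ i.succ)
  have hS : ∀ i, (Ioo 0 (ℓ i)).Nonempty := fun i ↦ nonempty_Ioo.2 (dist_pos.2 (hφ i))
  obtain ⟨c, hc, hR⟩ := exists_chain_of_forall_exists_pred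
    (fun i ↦ Ioo 0 (ℓ i) ×ˢ Ioo 0 (ℓ i))
    (fun i j (a b : ℝ × ℝ) ↦
      ∀ y ∈ ({f i a.1, f' i a.2} : Set X), ∀ z ∈ ({f j b.1, f' j b.2} : Set X),
        dist y (φ i.succ) + dist (φ i.succ) z > dist y z)
    (fun i ↦ (hS i).prod (hS i))
    (by
      rintro i j hij ⟨t, t'⟩ ⟨ht, ht'⟩
      have hm : j.castSucc = i.succ := Fin.ext (by simp [← hij])
      simp only [ℓ, hm] at ht ht'
      obtain ⟨s, hs, s', hs', H⟩ := hnb.exists_pair_dist_lt_add (hf i) (hf' i) (hne i) (hφ i)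
        (hm ▸ hf j) (hm ▸ hf' j) ht ht'
      exact ⟨(s, s'), ⟨hs, hs'⟩, H⟩)
  exact ⟨fun i ↦ f i (c i).1, fun i ↦ f' i (c i).2, fun i ↦ ⟨_, (hc i).1, rfl⟩,
    fun i ↦ ⟨_, (hc i).2, rfl⟩, hR⟩

theorem stmt14 {X : Type*} [MetricSpace X] (hX : GeodesicSpace X) (hnb : NonBranching X)
    (q : ℕ) (hq : 2 ≤ q) (φ : Fin (q + 1) → X)
    (hφ : ∀ i : Fin q, φ i.castSucc ≠ φ i.succ)
    (f f' : Fin q → ℝ → X)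
    (hf : ∀ i, IsGeodesic (φ i.castSucc) (φ i.succ) (f i))
    (hf' : ∀ i, IsGeodesic (φ i.castSucc) (φ i.succ) (f' i))
    (hne : ∀ i, ∃ t ∈ Set.Icc (0 : ℝ) (dist (φ i.castSucc) (φ i.succ)), f i t ≠ f' i t) :
    ∃ x x' : Fin q → X,
      (∀ i, ∃ t ∈ Set.Ioo (0 : ℝ) (dist (φ i.castSucc) (φ i.succ)), f i t = x i) ∧
      (∀ i, ∃ t ∈ Set.Ioo (0 : ℝ) (dist (φ i.castSucc) (φ i.succ)), f' i t = x' i) ∧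
      (∀ i j : Fin q, (i : ℕ) + 1 = (j : ℕ) →
        ∀ y ∈ ({x i, x' i} : Set X), ∀ z ∈ ({x j, x' j} : Set X),
          dist y (φ i.succ) + dist (φ i.succ) z > dist y z) :=
  stmt14_general hnb q φ hφ f f' hf hf' hne
end
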